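/- Let X and Y be positive semidefinite matrices in C^{n×n}, and let σ_min denote the minimum of the smallest nonzero singular values of X and Y. Then ||X⁻¹ - Y⁻¹||_F ≤ 3·||X - Y||_F / σ_min², where X⁻¹ and Y⁻¹ denote the Moore–Penrose pseudo-inverses. -/

import Mathlib

open Matrix Finset
open scoped ComplexOrder

noncomputable def frob {m n : ℕ} (M : Matrix (Fin m) (Fin n) ℂ) : ℝ :=
  Real.sqrt (∑ i, ∑ j, ‖M i j‖ ^ 2)

noncomputable def spec {m n : ℕ} (M : Matrix (Fin m) (Fin n) ℂ) : ℝ :=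
  ‖LinearMap.toContinuousLinearMap (Matrix.toEuclideanLin M)‖

def IsMoorePenrose {m n : ℕ} (M : Matrix (Fin m) (Fin n) ℂ) (G : Matrix (Fin n) (Fin m) ℂ) : Prop :=
  M * G * M = M ∧ G * M * G = G ∧ (M * G)ᴴ = M * G ∧ (G * M)ᴴ = G * M

noncomputable def enorm {n : ℕ} (x : Fin n → ℂ) : ℝ := Real.sqrt (∑ i, ‖x i‖ ^ 2)

/-!
Diagonalize `X = U D Uᴴ` and `Y = V E Vᴴ`. By uniqueness of the Moore–Penrose inverse,
`X⁺ = U D⁺ Uᴴ` and `Y⁺ = V E⁺ Vᴴ`, where `D⁺` inverts the nonzero eigenvalues. With `W = Uᴴ V`,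
unitary invariance of the Frobenius norm turns `X - Y` and `X⁺ - Y⁺` into `D W - W E` and
`D⁺ W - W E⁺`, whose `(i, j)` entries are `(dᵢ - eⱼ) Wᵢⱼ` and `(dᵢ⁺ - eⱼ⁺) Wᵢⱼ`. Since every
eigenvalue is `0` or at least `σ`, `|dᵢ⁺ - eⱼ⁺| ≤ |dᵢ - eⱼ| / σ²`, so the bound even holds with
constant `1`.
-/

namespace IsMoorePenrose

variable {m n : ℕ}

theorem unique {M : Matrix (Fin m) (Fin n) ℂ} {G G' : Matrix (Fin n) (Fin m) ℂ}
    (hG : IsMoorePenrose M G) (hG' : IsMoorePenrose M G') : G = G' := by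
  obtain ⟨h1, h2, h3, h4⟩ := hG
  obtain ⟨k1, k2, k3, k4⟩ := hG'
  have hMG : M * G = M * G' :=
    calc M * G = (M * G' * M * G)ᴴ := by rw [k1, h3]
    _ = (M * G)ᴴ * (M * G')ᴴ := by rw [← conjTranspose_mul, Matrix.mul_assoc (M * G')]
    _ = M * G' := by rw [h3, k3, ← Matrix.mul_assoc, h1]
  have hGM : G * M = G' * M :=
    calc G * M = (G * (M * G' * M))ᴴ := by rw [k1, h4]
    _ = (G' * M)ᴴ * (G * M)ᴴ := by rw [← conjTranspose_mul]; simp only [Matrix.mul_assoc]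
    _ = G' * M := by rw [k4, h4]; simp only [Matrix.mul_assoc]; rw [← Matrix.mul_assoc M G M, h1]
  calc G = G * M * G := h2.symm
  _ = G' * M * G' := by rw [hGM, Matrix.mul_assoc, hMG, ← Matrix.mul_assoc]
  _ = G' := k2

theorem map {F : Type*} [FunLike F (Matrix (Fin n) (Fin n) ℂ) (Matrix (Fin n) (Fin n) ℂ)]
    [MulHomClass F _ _] [StarHomClass F _ _] (φ : F) {M G : Matrix (Fin n) (Fin n) ℂ}
    (h : IsMoorePenrose M G) : IsMoorePenrose (φ M) (φ G) := by
  obtain ⟨h1, h2, h3, h4⟩ := h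
  simp only [IsMoorePenrose, ← star_eq_conjTranspose, ← map_mul, ← map_star] at *
  rw [h1, h2, h3, h4]
  exact ⟨rfl, rfl, rfl, rfl⟩

theorem diagonal_inv (d : Fin n → ℂ) : IsMoorePenrose (diagonal d) (diagonal d⁻¹) := by
  refine ⟨?_, ?_, ?_, ?_⟩ <;> simp only [diagonal_mul_diagonal, diagonal_conjTranspose] <;>
    congr 1 <;> funext i <;> rcases eq_or_ne (d i) 0 with h | h <;> simp [h]

end IsMoorePenrose

theorem Matrix.IsHermitian.eq_of_isMoorePenrose {n : ℕ} {A G : Matrix (Fin n) (Fin n) ℂ}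
    (hA : A.IsHermitian) (hG : IsMoorePenrose A G) :
    G = Unitary.conjStarAlgAut ℂ _ hA.eigenvectorUnitary
      (diagonal (RCLike.ofReal ∘ hA.eigenvalues)⁻¹) := by
  have h := (IsMoorePenrose.diagonal_inv (RCLike.ofReal ∘ hA.eigenvalues)).map
    (Unitary.conjStarAlgAut ℂ _ hA.eigenvectorUnitary)
  rw [← hA.spectral_theorem] at h
  exact hG.unique h

section Frobenius

variable {m n : ℕ}

theorem frob_nonneg (M : Matrix (Fin m) (Fin n) ℂ) : 0 ≤ frob M := Real.sqrt_nonneg _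

theorem frob_eq_sqrt_re_trace (M : Matrix (Fin m) (Fin n) ℂ) : frob M = √(Mᴴ * M).trace.re := by
  unfold frob
  congr 1
  have : Matrix.trace (Mᴴ * M) = ((∑ i, ∑ j, ‖M i j‖ ^ 2 : ℝ) : ℂ) := by
    rw [Matrix.trace]
    simp only [Matrix.diag_apply, Matrix.mul_apply, Matrix.conjTranspose_apply]
    rw [Finset.sum_comm]
    push_cast
    refine Finset.sum_congr rfl fun i _ => Finset.sum_congr rfl fun j _ => ?_
    rw [RCLike.star_def, ← Complex.normSq_eq_conj_mul_self, Complex.normSq_eq_norm_sq]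
    norm_cast
  rw [this, Complex.ofReal_re]

theorem frob_mul_mul_of_mem_unitaryGroup {U : Matrix (Fin m) (Fin m) ℂ}
    {V : Matrix (Fin n) (Fin n) ℂ} (hU : U ∈ unitaryGroup (Fin m) ℂ)
    (hV : V ∈ unitaryGroup (Fin n) ℂ) (M : Matrix (Fin m) (Fin n) ℂ) :
    frob (U * M * V) = frob M := by
  rw [frob_eq_sqrt_re_trace, frob_eq_sqrt_re_trace]
  have hUU : Uᴴ * U = 1 := mem_unitaryGroup_iff'.mp hU
  have hVV : V * Vᴴ = 1 := mem_unitaryGroup_iff.mp hV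
  have : (U * M * V)ᴴ * (U * M * V) = Vᴴ * (Mᴴ * M * V) := by
    simp only [conjTranspose_mul, Matrix.mul_assoc]
    rw [← Matrix.mul_assoc Uᴴ, hUU, Matrix.one_mul]
  rw [this, trace_mul_comm, Matrix.mul_assoc, hVV, Matrix.mul_one]

theorem frob_conjStarAlgAut_sub_conjStarAlgAut (U V : unitaryGroup (Fin n) ℂ)
    (A B : Matrix (Fin n) (Fin n) ℂ) :
    frob (Unitary.conjStarAlgAut ℂ _ U A - Unitary.conjStarAlgAut ℂ _ V B) =
      frob (A * (star U * V : Matrix _ _ ℂ) - (star U * V : Matrix _ _ ℂ) * B) := by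
  rw [← frob_mul_mul_of_mem_unitaryGroup (star U).2 V.2]
  simp only [Unitary.conjStarAlgAut_apply, Unitary.coe_star, Submonoid.coe_mul, mul_sub, sub_mul,
    mul_assoc, Unitary.coe_star_mul_self]
  rw [← mul_assoc (star (U : Matrix (Fin n) (Fin n) ℂ)), Unitary.coe_star_mul_self, one_mul,
    mul_one]

theorem diagonal_mul_sub_mul_diagonal_apply (W : Matrix (Fin m) (Fin n) ℂ) (d : Fin m → ℂ)
    (e : Fin n → ℂ) (i : Fin m) (j : Fin n) :
    (diagonal d * W - W * diagonal e) i j = (d i - e j) * W i j := by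
  simp only [Matrix.sub_apply, diagonal_mul, mul_diagonal]
  ring

theorem frob_diagonal_mul_sub_mul_diagonal_le (W : Matrix (Fin m) (Fin n) ℂ)
    {d d' : Fin m → ℂ} {e e' : Fin n → ℂ} {c : ℝ} (hc : 0 ≤ c)
    (h : ∀ i j, ‖d' i - e' j‖ ≤ c * ‖d i - e j‖) :
    frob (diagonal d' * W - W * diagonal e') ≤ c * frob (diagonal d * W - W * diagonal e) := by
  unfold frob
  rw [← Real.sqrt_sq hc, ← Real.sqrt_mul (sq_nonneg c)]
  simp_rw [Finset.mul_sum, diagonal_mul_sub_mul_diagonal_apply, norm_mul, mul_pow, ← mul_assoc,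
    ← mul_pow]
  gcongr with i _ j _
  exact h i j

end Frobenius

theorem abs_inv_sub_inv_le {σ a b : ℝ} (hσ : 0 < σ) (ha : a ≠ 0 → σ ≤ a) (hb : b ≠ 0 → σ ≤ b) :
    |a⁻¹ - b⁻¹| ≤ |a - b| / σ ^ 2 := by
  have inv_le (x : ℝ) (hx : σ ≤ x) : x⁻¹ ≤ x / σ ^ 2 := by
    rw [inv_eq_one_div, div_le_div_iff₀ (by linarith) (by positivity)]
    nlinarith
  rcases eq_or_ne a 0 with rfl | ha0 <;> rcases eq_or_ne b 0 with rfl | hb0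
  · simp
  · have hb := hb hb0
    rw [_root_.inv_zero, zero_sub, zero_sub, abs_neg, abs_neg,
      abs_of_pos (inv_pos.2 (hσ.trans_le hb)), abs_of_pos (hσ.trans_le hb)]
    exact inv_le b hb
  · have ha := ha ha0
    rw [_root_.inv_zero, sub_zero, sub_zero, abs_of_pos (inv_pos.2 (hσ.trans_le ha)),
      abs_of_pos (hσ.trans_le ha)]
    exact inv_le a ha
  · have ha := ha ha0
    have hb := hb hb0
    rw [inv_sub_inv ha0 hb0, abs_div, abs_sub_comm, abs_of_pos (by nlinarith : 0 < a * b)]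
    exact div_le_div_of_nonneg_left (abs_nonneg _) (by positivity) (by nlinarith)

theorem stmt1 {n : ℕ} (X Y Xinv Yinv : Matrix (Fin n) (Fin n) ℂ)
    (hX : X.PosSemidef) (hY : Y.PosSemidef)
    (hXinv : IsMoorePenrose X Xinv) (hYinv : IsMoorePenrose Y Yinv)
    (σ : ℝ) (hσ : 0 < σ)
    (hσX : ∀ i, hX.1.eigenvalues i ≠ 0 → σ ≤ hX.1.eigenvalues i)
    (hσY : ∀ i, hY.1.eigenvalues i ≠ 0 → σ ≤ hY.1.eigenvalues i) :
    frob (Xinv - Yinv) ≤ 3 * frob (X - Y) / σ ^ 2 := by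
  set d : Fin n → ℂ := RCLike.ofReal ∘ hX.1.eigenvalues
  set e : Fin n → ℂ := RCLike.ofReal ∘ hY.1.eigenvalues
  set W : Matrix (Fin n) (Fin n) ℂ := star hX.1.eigenvectorUnitary * hY.1.eigenvectorUnitary
  have hdiff : frob (X - Y) = frob (diagonal d * W - W * diagonal e) := by
    conv_lhs => rw [hX.1.spectral_theorem, hY.1.spectral_theorem]
    exact frob_conjStarAlgAut_sub_conjStarAlgAut _ _ _ _
  have hdiff_inv : frob (Xinv - Yinv) = frob (diagonal d⁻¹ * W - W * diagonal e⁻¹) := by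
    rw [hX.1.eq_of_isMoorePenrose hXinv, hY.1.eq_of_isMoorePenrose hYinv]
    exact frob_conjStarAlgAut_sub_conjStarAlgAut _ _ _ _
  have hentry (i j : Fin n) : ‖d⁻¹ i - e⁻¹ j‖ ≤ (σ ^ 2)⁻¹ * ‖d i - e j‖ := by
    simpa [d, e, ← Complex.ofReal_inv, ← Complex.ofReal_sub, div_eq_inv_mul] using
      abs_inv_sub_inv_le hσ (hσX i) (hσY j)
  calc frob (Xinv - Yinv) ≤ (σ ^ 2)⁻¹ * frob (X - Y) := by
        rw [hdiff_inv, hdiff]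
        exact frob_diagonal_mul_sub_mul_diagonal_le W (by positivity) hentry
    _ ≤ 3 * frob (X - Y) / σ ^ 2 := by
        rw [inv_mul_eq_div]
        gcongr
        linarith [frob_nonneg (X - Y)]
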